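/- The number of pairs (A,B) ∈ ℤ² with max{|A|³, B²} ≤ X⁶ and such that for every prime p, p⁴ ∤ A or p⁶ ∤ B, and 4A³ + 27B² ≠ 0, is C₁X⁵ + O(X³) where C₁ = 4/ζ(10). -/

import Mathlib

/-!
Put `a = ⌊X²⌋` and `b = ⌊X³⌋`, so that the height condition says that `(A, B)` lies in the box
`[-a, a] × [-b, b]`. For `(A, B) ≠ (0, 0)` the set of `d` with `d⁴ ∣ A` and `d⁶ ∣ B` is
bounded and closed under divisors and lcm, hence is the set of divisors of a single `m`, and
`m = 1` exactly when no prime `p` has `p⁴ ∣ A` and `p⁶ ∣ B`. Möbius inversion therefore counts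
these pairs in the box as `∑_d μ(d) N(d)`, where `N(d) = (2⌊a/d⁴⌋ + 1)(2⌊b/d⁶⌋ + 1) - 1` is
the number of nonzero box points with `d⁴ ∣ A` and `d⁶ ∣ B`. Replacing `N(d)` by `4ab/d¹⁰`
costs `O((a + b)/d²)`, which sums to `O(X³)`, and `∑ μ(d)/d¹⁰ = 1/ζ(10)`. Finally
`ab = X⁵ + O(X³)`, and there are at most two singular pairs `4A³ = -27B²` for each `A`.
-/

open Finset ArithmeticFunction Real
open scoped Classical ArithmeticFunction.Moebius

theorem Nat.lcm_pow_dvd {d e n k : ℕ} (hd : d ^ k ∣ n) (he : e ^ k ∣ n) :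
    Nat.lcm d e ^ k ∣ n := by
  rcases eq_or_ne n 0 with rfl | hn
  · exact dvd_zero _
  rcases Nat.eq_zero_or_pos k with rfl | hk
  · simp
  have hd0 : d ≠ 0 := by rintro rfl; rw [zero_pow hk.ne', zero_dvd_iff] at hd; exact hn hd
  have he0 : e ≠ 0 := by rintro rfl; rw [zero_pow hk.ne', zero_dvd_iff] at he; exact hn he
  rw [← Nat.factorization_le_iff_dvd (pow_ne_zero _ hd0) hn] at hd
  rw [← Nat.factorization_le_iff_dvd (pow_ne_zero _ he0) hn] at he
  rw [← Nat.factorization_le_iff_dvd (pow_ne_zero _ (Nat.lcm_ne_zero hd0 he0)) hn,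
    Nat.factorization_pow, Nat.factorization_lcm hd0 he0]
  rw [Nat.factorization_pow] at hd he
  intro p
  have := max_le (hd p) (he p)
  simp only [Finsupp.smul_apply, smul_eq_mul, Finsupp.sup_apply] at this ⊢
  rwa [Nat.mul_max_mul_left] at this

theorem sum_divisors_moebius (n : ℕ) :
    ∑ d ∈ n.divisors, μ d = if n = 1 then 1 else 0 := by
  rw [← coe_mul_zeta_apply, moebius_mul_coe_zeta, one_apply]

section LcmClosed

variable {Q : ℕ → Prop} {D : ℕ}

theorem Nat.exists_forall_iff_dvd_of_lcm_mem (h1 : Q 1) (hdvd : ∀ d e, d ∣ e → Q e → Q d)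
    (hlcm : ∀ d e, Q d → Q e → Q (Nat.lcm d e)) (hbound : ∀ d, Q d → d ≤ D) :
    ∃ m ≠ 0, ∀ d, Q d ↔ d ∣ m := by
  have hQ0 : ∀ d, Q d → d ≠ 0 := by
    rintro _ h rfl
    exact D.lt_irrefl (hbound _ (hdvd (D + 1) 0 (dvd_zero _) h))
  set m := Nat.findGreatest Q D
  have hm : Q m := Nat.findGreatest_spec (hbound 1 h1) h1
  refine ⟨m, hQ0 m hm, fun d => ⟨fun hd => ?_, fun hd => hdvd d m hd hm⟩⟩
  have hl := hlcm d m hd hm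
  have hlm : Nat.lcm d m = m :=
    le_antisymm (Nat.le_findGreatest (hbound _ hl) hl)
      (Nat.le_of_dvd (Nat.pos_of_ne_zero (hQ0 _ hl)) (Nat.dvd_lcm_right d m))
  exact hlm ▸ Nat.dvd_lcm_left d m

theorem sum_filter_moebius_eq_ite [DecidablePred Q] (h1 : Q 1)
    (hdvd : ∀ d e, d ∣ e → Q e → Q d) (hlcm : ∀ d e, Q d → Q e → Q (Nat.lcm d e))
    (hbound : ∀ d, Q d → d ≤ D) :
    ∑ d ∈ Icc 1 D with Q d, μ d = if ∀ p : ℕ, p.Prime → ¬ Q p then 1 else 0 := by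
  obtain ⟨m, hm0, hQ⟩ := Nat.exists_forall_iff_dvd_of_lcm_mem h1 hdvd hlcm hbound
  have hdiv : {d ∈ Icc 1 D | Q d} = m.divisors := by
    ext d
    simp only [mem_filter, mem_Icc, Nat.mem_divisors, hQ]
    refine ⟨fun h => ⟨h.2, hm0⟩,
      fun h => ⟨⟨Nat.pos_of_ne_zero ?_, hbound d ((hQ d).2 h.1)⟩, h.1⟩⟩
    rintro rfl
    exact hm0 (Nat.eq_zero_of_zero_dvd h.1)
  rw [hdiv, sum_divisors_moebius]
  simp only [hQ, Nat.eq_one_iff_not_exists_prime_dvd]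

end LcmClosed

theorem Int.filter_dvd_Icc_neg_eq_map {a c : ℤ} (hc : 0 < c) :
    {x ∈ Icc (-a) a | c ∣ x} =
      (Icc (-(a / c)) (a / c)).map ⟨(· * c), mul_left_injective₀ hc.ne'⟩ := by
  ext x
  simp only [mem_filter, mem_Icc, mem_map, Function.Embedding.coeFn_mk,
    dvd_iff_exists_eq_mul_left, neg_le (a := a / c), Int.le_ediv_iff_mul_le hc]
  constructor
  · rintro ⟨⟨h1, h2⟩, y, rfl⟩
    exact ⟨y, ⟨by linarith, h2⟩, rfl⟩
  · rintro ⟨y, ⟨h1, h2⟩, rfl⟩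
    exact ⟨⟨by linarith, h2⟩, y, rfl⟩

theorem Int.card_filter_dvd_Icc_neg {a c : ℤ} (ha : 0 ≤ a) (hc : 0 < c) :
    (#{x ∈ Icc (-a) a | c ∣ x} : ℤ) = 2 * (a / c) + 1 := by
  rw [Int.filter_dvd_Icc_neg_eq_map hc, card_map, Int.card_Icc,
    Int.toNat_of_nonneg (by have := Int.ediv_nonneg ha hc.le; omega)]
  ring

theorem card_filter_dvd_box_erase_zero {a b c c' : ℤ} (ha : 0 ≤ a) (hb : 0 ≤ b)
    (hc : 0 < c) (hc' : 0 < c') :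
    (#{AB ∈ (Icc (-a) a ×ˢ Icc (-b) b).erase (0, 0) | c ∣ AB.1 ∧ c' ∣ AB.2} : ℤ) =
      (2 * (a / c) + 1) * (2 * (b / c') + 1) - 1 := by
  have hmem :
      ((0 : ℤ), (0 : ℤ)) ∈ {AB ∈ Icc (-a) a ×ˢ Icc (-b) b | c ∣ AB.1 ∧ c' ∣ AB.2} := by
    simp [ha, hb]
  rw [filter_erase, card_erase_of_mem hmem, Nat.cast_sub (card_pos.2 ⟨_, hmem⟩),
    filter_product (p := (c ∣ ·)) (q := (c' ∣ ·)), card_product, Nat.cast_mul,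
    Int.card_filter_dvd_Icc_neg ha hc, Int.card_filter_dvd_Icc_neg hb hc', Nat.cast_one]

/-- For `(k, l) = (4, 6)`: the models `y² = x³ + Ax + B` that do not arise from an integral
model by the rescaling `(A, B) ↦ (u⁴A, u⁶B)` with `u > 1`. -/
def IsMinimalPair (k l : ℕ) (A B : ℤ) : Prop :=
  ∀ p : ℕ, p.Prime → ¬ (p : ℤ) ^ k ∣ A ∨ ¬ (p : ℤ) ^ l ∣ B

theorem sum_moebius_dvd_pow_eq_ite {k l D : ℕ} (hk : k ≠ 0) (hl : l ≠ 0) {A B : ℤ}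
    (hAB : (A, B) ≠ (0, 0)) (hA : |A| ≤ D) (hB : |B| ≤ D) :
    ∑ d ∈ Icc 1 D with ((d : ℕ) : ℤ) ^ k ∣ A ∧ ((d : ℕ) : ℤ) ^ l ∣ B, μ d =
      if IsMinimalPair k l A B then 1 else 0 := by
  simp only [IsMinimalPair, ← Int.natCast_pow, Int.natCast_dvd, ← not_and_or]
  refine sum_filter_moebius_eq_ite (Q := fun d => d ^ k ∣ A.natAbs ∧ d ^ l ∣ B.natAbs)
    (by simp) ?_ ?_ ?_
  · exact fun d e hde he => ⟨(pow_dvd_pow_of_dvd hde k).trans he.1,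
      (pow_dvd_pow_of_dvd hde l).trans he.2⟩
  · exact fun d e hd he => ⟨Nat.lcm_pow_dvd hd.1 he.1, Nat.lcm_pow_dvd hd.2 he.2⟩
  · rintro d ⟨hdA, hdB⟩
    rw [← Int.natCast_natAbs, Nat.cast_le] at hA hB
    rcases eq_or_ne A 0 with rfl | hA0
    · have hB0 : B ≠ 0 := by rintro rfl; exact hAB rfl
      exact (Nat.le_self_pow hl d).trans ((Nat.le_of_dvd (Int.natAbs_pos.2 hB0) hdB).trans hB)
    · exact (Nat.le_self_pow hk d).trans ((Nat.le_of_dvd (Int.natAbs_pos.2 hA0) hdA).trans hA)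

theorem card_filter_isMinimalPair_eq_sum_moebius {k l D : ℕ} (hk : k ≠ 0) (hl : l ≠ 0)
    {a b : ℤ} (ha : a ≤ D) (hb : b ≤ D) :
    (#{AB ∈ Icc (-a) a ×ˢ Icc (-b) b | IsMinimalPair k l AB.1 AB.2} : ℤ) =
      ∑ d ∈ Icc 1 D, μ d *
        #{AB ∈ (Icc (-a) a ×ˢ Icc (-b) b).erase (0, 0) |
          ((d : ℕ) : ℤ) ^ k ∣ AB.1 ∧ ((d : ℕ) : ℤ) ^ l ∣ AB.2} := by
  have hzero : ¬ IsMinimalPair k l 0 0 := fun h => by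
    rcases h 2 Nat.prime_two with h | h <;> exact h (dvd_zero _)
  simp_rw [natCast_card_filter, mul_sum, mul_boole]
  rw [sum_comm, ← sum_erase (a := ((0 : ℤ), (0 : ℤ))) _ (by simp [hzero])]
  refine sum_congr rfl fun ⟨A, B⟩ hAB => ?_
  simp only [mem_erase, mem_product, mem_Icc] at hAB
  have hA : |A| ≤ D := abs_le.2 ⟨by omega, by omega⟩
  have hB : |B| ≤ D := abs_le.2 ⟨by omega, by omega⟩
  rw [← sum_filter]
  exact (sum_moebius_dvd_pow_eq_ite hk hl hAB.1 hA hB).symm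

theorem abs_lattice_count_sub_area_le {x y : ℝ} (hx : 0 ≤ x) (hy : 0 ≤ y) :
    |(2 * ⌊x⌋ + 1) * (2 * ⌊y⌋ + 1) - 1 - 4 * (x * y)| ≤ 4 * (x + y) := by
  have hU0 : (0 : ℝ) ≤ ⌊x⌋ := by exact_mod_cast Int.floor_nonneg.2 hx
  have hV0 : (0 : ℝ) ≤ ⌊y⌋ := by exact_mod_cast Int.floor_nonneg.2 hy
  have hUx := Int.floor_le x
  have hVy := Int.floor_le y
  have hxU := Int.lt_floor_add_one x
  have hyV := Int.lt_floor_add_one y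
  rw [abs_le]
  constructor <;> nlinarith [mul_le_mul hUx hVy hV0 hx]

theorem summable_moebius_div_pow {s : ℕ} (hs : 1 < s) :
    Summable fun n : ℕ => (μ n : ℝ) / n ^ s := by
  refine (summable_one_div_nat_pow.2 hs).of_norm_bounded fun n => ?_
  rw [norm_div, norm_pow, Real.norm_natCast, Real.norm_eq_abs]
  exact div_le_div_of_nonneg_right (by exact_mod_cast abs_moebius_le_one) (by positivity)

theorem div_pow_le_div_sq {a : ℝ} (ha : 0 ≤ a) {k : ℕ} (hk : 2 ≤ k) (d : ℕ) :
    a / (d : ℝ) ^ k ≤ a / (d : ℝ) ^ 2 := by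
  rcases eq_or_ne d 0 with rfl | hd
  · simp [zero_pow (by omega : k ≠ 0)]
  · exact div_le_div_of_nonneg_left ha (by positivity)
      (pow_le_pow_right₀ (by exact_mod_cast Nat.one_le_iff_ne_zero.2 hd) hk)

theorem abs_tsum_moebius_mul_lattice_count_sub_le {a b : ℝ} (ha : 0 ≤ a) (hb : 0 ≤ b)
    {k l : ℕ} (hk : 2 ≤ k) (hl : 2 ≤ l) :
    |∑' d : ℕ, (μ d : ℝ) * ((2 * ⌊a / d ^ k⌋ + 1) * (2 * ⌊b / d ^ l⌋ + 1) - 1) -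
        4 * a * b * ∑' d : ℕ, (μ d : ℝ) / d ^ (k + l)| ≤ 2 * π ^ 2 / 3 * (a + b) := by
  set f : ℕ → ℝ := fun d => μ d * ((2 * ⌊a / d ^ k⌋ + 1) * (2 * ⌊b / d ^ l⌋ + 1) - 1)
  set g : ℕ → ℝ := fun d => 4 * a * b * (μ d / d ^ (k + l))
  have hg : Summable g := (summable_moebius_div_pow (by omega)).mul_left _
  have hbound : ∀ d, ‖f d - g d‖ ≤ 4 * (a + b) * (1 / (d : ℝ) ^ 2) := by
    intro d
    have hfg : f d - g d = μ d * ((2 * ⌊a / d ^ k⌋ + 1) * (2 * ⌊b / d ^ l⌋ + 1) - 1 -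
        4 * (a / d ^ k * (b / d ^ l))) := by
      simp only [f, g, pow_add, div_mul_div_comm]; ring
    rw [hfg, Real.norm_eq_abs, abs_mul]
    calc |(μ d : ℝ)| * |(2 * ⌊a / d ^ k⌋ + 1) * (2 * ⌊b / d ^ l⌋ + 1) - 1 -
          4 * (a / d ^ k * (b / d ^ l))|
        ≤ 1 * (4 * (a / d ^ k + b / d ^ l)) :=
          mul_le_mul (by exact_mod_cast abs_moebius_le_one)
            (abs_lattice_count_sub_area_le (by positivity) (by positivity)) (abs_nonneg _)
            zero_le_one
      _ ≤ 4 * (a + b) * (1 / (d : ℝ) ^ 2) := by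
          have := div_pow_le_div_sq ha hk d
          have := div_pow_le_div_sq hb hl d
          rw [mul_one_div, mul_div_assoc, add_div]
          linarith
  have hsum := hasSum_zeta_two.mul_left (4 * (a + b))
  have hfg := hsum.summable.of_norm_bounded hbound
  rw [← tsum_mul_left, ← (by simpa using hfg.add hg : Summable f).tsum_sub hg]
  calc ‖∑' d, (f d - g d)‖ ≤ 4 * (a + b) * (π ^ 2 / 6) := tsum_of_norm_bounded hsum hbound
    _ = 2 * π ^ 2 / 3 * (a + b) := by ring

theorem intCast_ediv_pow_eq_floor (c : ℤ) (d j : ℕ) :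
    ((c / (d : ℤ) ^ j : ℤ) : ℝ) = ⌊(c : ℝ) / (d : ℝ) ^ j⌋ := by
  rw [← Nat.cast_pow, ← Nat.cast_pow, Int.floor_div_natCast, Int.floor_intCast]

theorem abs_card_filter_isMinimalPair_sub_le {k l : ℕ} (hk : 2 ≤ k) (hl : 2 ≤ l) {a b : ℤ}
    (ha : 0 ≤ a) (hb : 0 ≤ b) :
    |(#{AB ∈ Icc (-a) a ×ˢ Icc (-b) b | IsMinimalPair k l AB.1 AB.2} : ℝ) -
        4 * a * b * ∑' d : ℕ, (μ d : ℝ) / d ^ (k + l)| ≤ 2 * π ^ 2 / 3 * (a + b) := by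
  set D := (a + b).toNat
  have haD : a ≤ D := by omega
  have hbD : b ≤ D := by omega
  set F : ℕ → ℤ := fun d => (2 * (a / (d : ℤ) ^ k) + 1) * (2 * (b / (d : ℤ) ^ l) + 1) - 1
  have hsieve : (#{AB ∈ Icc (-a) a ×ˢ Icc (-b) b | IsMinimalPair k l AB.1 AB.2} : ℤ) =
      ∑ d ∈ Icc 1 D, μ d * F d := by
    rw [card_filter_isMinimalPair_eq_sum_moebius (by omega) (by omega) haD hbD]
    refine sum_congr rfl fun d hd => ?_
    have hd : (0 : ℤ) < d := by have := (mem_Icc.1 hd).1; omega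
    rw [card_filter_dvd_box_erase_zero ha hb (pow_pos hd k) (pow_pos hd l)]
  have hvanish : ∀ d ∉ Icc 1 D, (μ d : ℝ) * F d = 0 := by
    intro d hd
    rcases eq_or_ne d 0 with rfl | hd0
    · simp
    have hDd : D < d := by simp only [mem_Icc, not_and, not_le] at hd; omega
    have hk' : (d : ℤ) ≤ (d : ℤ) ^ k := le_self_pow₀ (by omega) (by omega)
    have hl' : (d : ℤ) ≤ (d : ℤ) ^ l := le_self_pow₀ (by omega) (by omega)
    simp only [F, Int.ediv_eq_zero_of_lt ha (by omega : a < (d : ℤ) ^ k),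
      Int.ediv_eq_zero_of_lt hb (by omega : b < (d : ℤ) ^ l)]
    simp
  have hcard : (#{AB ∈ Icc (-a) a ×ˢ Icc (-b) b | IsMinimalPair k l AB.1 AB.2} : ℝ) =
      ∑' d : ℕ, (μ d : ℝ) *
        ((2 * ⌊(a : ℝ) / d ^ k⌋ + 1) * (2 * ⌊(b : ℝ) / d ^ l⌋ + 1) - 1) := by
    calc (#{AB ∈ Icc (-a) a ×ˢ Icc (-b) b | IsMinimalPair k l AB.1 AB.2} : ℝ)
        = ∑ d ∈ Icc 1 D, (μ d : ℝ) * F d := by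
          exact_mod_cast congrArg (Int.cast : ℤ → ℝ) hsieve
      _ = ∑' d : ℕ, (μ d : ℝ) * F d := (tsum_eq_sum hvanish).symm
      _ = _ := by simp only [F]; push_cast; simp only [intCast_ediv_pow_eq_floor]
  rw [hcard]
  exact abs_tsum_moebius_mul_lattice_count_sub_le (by exact_mod_cast ha) (by exact_mod_cast hb)
    hk hl

theorem card_filter_discr_eq_zero_le (s t : Finset ℤ) :
    #{AB ∈ s ×ˢ t | 4 * AB.1 ^ 3 + 27 * AB.2 ^ 2 = 0} ≤ 2 * #s := by
  calc #{AB ∈ s ×ˢ t | 4 * AB.1 ^ 3 + 27 * AB.2 ^ 2 = 0}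
      ≤ #(s ×ˢ (univ : Finset Bool)) := by
        refine card_le_card_of_injOn (fun AB => (AB.1, decide (0 ≤ AB.2))) ?_ ?_
        · intro AB hAB
          simp only [mem_coe, mem_filter, mem_product] at hAB
          simp [hAB.1.1, le_or_gt]
        · rintro ⟨A, B⟩ hAB ⟨A', B'⟩ hAB' h
          simp only [mem_coe, mem_filter, mem_product] at hAB hAB'
          simp only [Prod.mk.injEq, decide_eq_decide] at h
          obtain ⟨rfl, hsign⟩ := h
          have hsq : B ^ 2 = B' ^ 2 := by linarith [hAB.2, hAB'.2]
          rw [Prod.mk.injEq]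
          refine ⟨rfl, ?_⟩
          rcases sq_eq_sq_iff_eq_or_eq_neg.1 hsq with h | h
          · exact h
          · omega
    _ = 2 * #s := by rw [card_product, card_univ, Fintype.card_bool, mul_comm]

theorem abs_card_minimal_nonsingular_sub_le {a b : ℤ} (ha : 0 ≤ a) (hb : 0 ≤ b) :
    |(#{AB ∈ Icc (-a) a ×ˢ Icc (-b) b |
          IsMinimalPair 4 6 AB.1 AB.2 ∧ 4 * AB.1 ^ 3 + 27 * AB.2 ^ 2 ≠ 0} : ℝ) -
        4 * a * b * ∑' d : ℕ, (μ d : ℝ) / d ^ 10| ≤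
      2 * (2 * a + 1) + 2 * π ^ 2 / 3 * (a + b) := by
  set S := {AB ∈ Icc (-a) a ×ˢ Icc (-b) b | IsMinimalPair 4 6 AB.1 AB.2}
  have hsplit := card_filter_add_card_filter_not
    (s := S) (p := fun AB : ℤ × ℤ => 4 * AB.1 ^ 3 + 27 * AB.2 ^ 2 ≠ 0)
  simp only [S, filter_filter, not_not] at hsplit
  have hbox : ((Icc (-a) a).card : ℤ) = 2 * a + 1 := by rw [Int.card_Icc]; omega
  have hsing : (#{AB ∈ Icc (-a) a ×ˢ Icc (-b) b |
      IsMinimalPair 4 6 AB.1 AB.2 ∧ 4 * AB.1 ^ 3 + 27 * AB.2 ^ 2 = 0} : ℝ) ≤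
        2 * (2 * a + 1) := by
    calc (_ : ℝ) ≤ #{AB ∈ Icc (-a) a ×ˢ Icc (-b) b | 4 * AB.1 ^ 3 + 27 * AB.2 ^ 2 = 0} := by
          refine Nat.cast_le.2 (card_le_card fun AB hAB => ?_)
          simp only [mem_filter] at hAB ⊢
          exact ⟨hAB.1, hAB.2.2⟩
      _ ≤ 2 * #(Icc (-a) a) := by exact_mod_cast card_filter_discr_eq_zero_le _ _
      _ = 2 * (2 * a + 1) := by rw [← Int.cast_natCast, hbox]; push_cast; ring
  have hmin := abs_card_filter_isMinimalPair_sub_le (k := 4) (l := 6) (by norm_num) (by norm_num)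
    ha hb
  rw [← hsplit] at hmin
  push_cast at hmin
  rw [abs_le] at hmin ⊢
  constructor <;> linarith [hmin.1, hmin.2]

theorem LSeries_ofReal_eq_tsum (f : ℕ → ℝ) {s : ℕ} (hs : s ≠ 0) :
    LSeries (fun n => (f n : ℂ)) s = ↑(∑' n : ℕ, f n / (n : ℝ) ^ s) := by
  rw [LSeries, Complex.ofReal_tsum]
  refine tsum_congr fun n => ?_
  rcases eq_or_ne n 0 with rfl | hn
  · simp [hs]
  · rw [LSeries.term_of_ne_zero hn, Complex.cpow_natCast]
    push_cast; rfl

theorem tsum_moebius_div_pow_mul_tsum_one_div_pow {s : ℕ} (hs : 1 < s) :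
    (∑' n : ℕ, (μ n : ℝ) / n ^ s) * ∑' n : ℕ, 1 / (n : ℝ) ^ s = 1 := by
  have h := LSeries_one_mul_Lseries_moebius (s := s) (by simpa using hs)
  have h1 := LSeries_ofReal_eq_tsum (fun _ => 1) (s := s) (by omega)
  have hμ := LSeries_ofReal_eq_tsum (fun n => (μ n : ℝ)) (s := s) (by omega)
  simp only [Complex.ofReal_one, Complex.ofReal_intCast] at h1 hμ
  rw [show (1 : ℕ → ℂ) = fun _ => 1 from rfl, h1, hμ, ← Complex.ofReal_mul] at h
  rw [mul_comm]
  exact_mod_cast h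

theorem inv_tsum_pnat_one_div_pow {s : ℕ} (hs : 1 < s) :
    (∑' n : ℕ+, 1 / (n : ℝ) ^ s)⁻¹ = ∑' n : ℕ, (μ n : ℝ) / n ^ s := by
  rw [tsum_pnat_eq_tsum_of_eq_zero (f := fun n : ℕ => 1 / (n : ℝ) ^ s) (by simp; omega)]
  exact (eq_inv_of_mul_eq_one_left (tsum_moebius_div_pow_mul_tsum_one_div_pow hs)).symm

theorem abs_tsum_moebius_div_pow_le_one {s : ℕ} (hs : 1 < s) :
    |∑' n : ℕ, (μ n : ℝ) / n ^ s| ≤ 1 := by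
  have hmul := tsum_moebius_div_pow_mul_tsum_one_div_pow hs
  have hζ : 1 ≤ ∑' n : ℕ, 1 / (n : ℝ) ^ s := by
    simpa using (summable_one_div_nat_pow.2 hs).le_tsum 1 (fun _ _ => by positivity)
  rw [abs_le]
  constructor <;> nlinarith

theorem intCast_max_abs_pow_le_pow_six_iff {X : ℝ} (hX : 0 ≤ X) (AB : ℤ × ℤ) :
    ((max (|AB.1| ^ 3) (AB.2 ^ 2) : ℤ) : ℝ) ≤ X ^ 6 ↔
      AB ∈ Icc (-⌊X ^ 2⌋) ⌊X ^ 2⌋ ×ˢ Icc (-⌊X ^ 3⌋) ⌊X ^ 3⌋ := by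
  rw [mem_product, mem_Icc, mem_Icc, ← abs_le, ← abs_le, Int.le_floor, Int.le_floor,
    Int.cast_max, max_le_iff, ← sq_abs AB.2]
  push_cast
  refine and_congr ?_ ?_
  · rw [show X ^ 6 = (X ^ 2) ^ 3 by ring]
    exact pow_le_pow_iff_left₀ (abs_nonneg _) (by positivity) (by norm_num)
  · rw [show X ^ 6 = (X ^ 3) ^ 2 by ring]
    exact pow_le_pow_iff_left₀ (abs_nonneg _) (by positivity) (by norm_num)

theorem abs_floor_mul_floor_sub_le {x y : ℝ} (hx : 0 ≤ x) (hy : 0 ≤ y) :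
    |(⌊x⌋ * ⌊y⌋ : ℝ) - x * y| ≤ x + y := by
  have hU0 : (0 : ℝ) ≤ ⌊x⌋ := by exact_mod_cast Int.floor_nonneg.2 hx
  have hV0 : (0 : ℝ) ≤ ⌊y⌋ := by exact_mod_cast Int.floor_nonneg.2 hy
  have hUx := Int.floor_le x
  have hVy := Int.floor_le y
  have hxU := Int.lt_floor_add_one x
  have hyV := Int.lt_floor_add_one y
  rw [abs_le]
  constructor <;> nlinarith [mul_le_mul hUx hVy hV0 hx]

theorem natCard_height_le_eq_card_filter {X : ℝ} (hX : 0 ≤ X) :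
    Nat.card {AB : ℤ × ℤ //
        ((max (|AB.1| ^ 3) (AB.2 ^ 2) : ℤ) : ℝ) ≤ X ^ 6 ∧
        (∀ p : ℕ, p.Prime → ¬ (p : ℤ) ^ 4 ∣ AB.1 ∨ ¬ (p : ℤ) ^ 6 ∣ AB.2) ∧
        4 * AB.1 ^ 3 + 27 * AB.2 ^ 2 ≠ 0} =
      #{AB ∈ Icc (-⌊X ^ 2⌋) ⌊X ^ 2⌋ ×ˢ Icc (-⌊X ^ 3⌋) ⌊X ^ 3⌋ |
        IsMinimalPair 4 6 AB.1 AB.2 ∧ 4 * AB.1 ^ 3 + 27 * AB.2 ^ 2 ≠ 0} := by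
  rw [← Nat.card_eq_finsetCard]
  refine Nat.card_congr (Equiv.subtypeEquivRight fun AB => ?_)
  rw [mem_filter, intCast_max_abs_pow_le_pow_six_iff hX]
  rfl

/-- The number of pairs `(A, B) ∈ ℤ²` with `max{|A|³, B²} ≤ X⁶`, such that for every prime
`p` either `p⁴ ∤ A` or `p⁶ ∤ B`, and `4A³ + 27B² ≠ 0`, is `C₁X⁵ + O(X³)`, where
`C₁ = 4/ζ(10)` and `ζ(10) = ∑_{n ≥ 1} n⁻¹⁰` is the Riemann zeta value. -/
theorem count_elliptic_curves_asymptotic :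
    ∃ C : ℝ, 0 < C ∧ ∀ X : ℝ, 1 ≤ X →
      |(Nat.card {AB : ℤ × ℤ //
          ((max (|AB.1| ^ 3) (AB.2 ^ 2) : ℤ) : ℝ) ≤ X ^ 6 ∧
          (∀ p : ℕ, p.Prime → ¬ (p : ℤ) ^ 4 ∣ AB.1 ∨ ¬ (p : ℤ) ^ 6 ∣ AB.2) ∧
          4 * AB.1 ^ 3 + 27 * AB.2 ^ 2 ≠ 0} : ℝ) -
        (4 / ∑' n : ℕ+, (1 : ℝ) / (n : ℝ) ^ 10) * X ^ 5| ≤ C * X ^ 3 := by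
  refine ⟨30, by norm_num, fun X hX => ?_⟩
  rw [natCard_height_le_eq_card_filter (by linarith), div_eq_mul_inv,
    inv_tsum_pnat_one_div_pow (by norm_num)]
  set M := ∑' n : ℕ, (μ n : ℝ) / n ^ 10
  have hmain := abs_card_minimal_nonsingular_sub_le
    (Int.floor_nonneg.2 (by positivity : 0 ≤ X ^ 2))
    (Int.floor_nonneg.2 (by positivity : 0 ≤ X ^ 3))
  have hab := abs_floor_mul_floor_sub_le (by positivity : 0 ≤ X ^ 2) (by positivity : 0 ≤ X ^ 3)
  have hM : |4 * M| ≤ 4 := by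
    rw [abs_mul, abs_of_pos four_pos]
    linarith [abs_tsum_moebius_div_pow_le_one (s := 10) (by norm_num)]
  have hπ : 2 * π ^ 2 / 3 ≤ 7 := by nlinarith [pi_lt_d2, pi_pos]
  have ha := Int.floor_le (X ^ 2)
  have hb := Int.floor_le (X ^ 3)
  have hX23 : X ^ 2 ≤ X ^ 3 := pow_le_pow_right₀ hX (by norm_num)
  have hX3 : 1 ≤ X ^ 3 := one_le_pow₀ hX
  set N : ℝ := ((#{AB ∈ Icc (-⌊X ^ 2⌋) ⌊X ^ 2⌋ ×ˢ Icc (-⌊X ^ 3⌋) ⌊X ^ 3⌋ |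
    IsMinimalPair 4 6 AB.1 AB.2 ∧ 4 * AB.1 ^ 3 + 27 * AB.2 ^ 2 ≠ 0} : ℕ) : ℝ)
  calc |N - 4 * M * X ^ 5|
      = |(N - 4 * ⌊X ^ 2⌋ * ⌊X ^ 3⌋ * M) +
          4 * M * (⌊X ^ 2⌋ * ⌊X ^ 3⌋ - X ^ 2 * X ^ 3)| := by ring_nf
    _ ≤ 2 * (2 * ⌊X ^ 2⌋ + 1) + 2 * π ^ 2 / 3 * (⌊X ^ 2⌋ + ⌊X ^ 3⌋) +
          4 * (X ^ 2 + X ^ 3) := by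
        grw [abs_add_le, abs_mul, hmain, hM, hab]
    _ ≤ 30 * X ^ 3 := by nlinarith
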